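/- arXiv:math/9404211 — 2 statements merged into one kernel-verified Lean document; each statement's English description precedes it below -/
import Mathlib

section
/- For all Banach spaces E and F and every bounded linear operator S : E → F, one has β_W(S) = ω(S*) = β_W(S**), where S* and S** denote the adjoint and the second adjoint of S. -/
open NormedSpace Metric Pointwise Filter

noncomputable section

variable (𝕜 : Type*) [RCLike 𝕜]

/-- A Banach space over `𝕜`, bundled. -/
structure BanachPkg where
  carrier : Type
  [inst1 : NormedAddCommGroup carrier]
  [inst2 : NormedSpace 𝕜 carrier]
  [inst3 : CompleteSpace carrier]

attribute [instance] BanachPkg.inst1 BanachPkg.inst2 BanachPkg.inst3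

variable {𝕜}

section Defs

variable {E F : Type*} [SeminormedAddCommGroup E] [NormedSpace 𝕜 E]
  [SeminormedAddCommGroup F] [NormedSpace 𝕜 F]

/-- A continuous linear operator is weakly compact if the image of the closed unit
ball is relatively compact in the weak topology. -/
def WCompact (T : E →L[𝕜] F) : Prop :=
  IsCompact (closure ((toWeakSpace 𝕜 F) '' (T '' closedBall 0 1)))

/-- The Banach-space adjoint of a continuous linear operator. -/
def dualOp (S : E →L[𝕜] F) : StrongDual 𝕜 F →L[𝕜] StrongDual 𝕜 E :=
  (ContinuousLinearMap.compL 𝕜 E F 𝕜).flip S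

@[simp] theorem dualOp_apply (S : E →L[𝕜] F) (f : StrongDual 𝕜 F) (x : E) :
    dualOp S f x = f (S x) := rfl

/-- The second adjoint `S** : E** → F**`. -/
def bidualOp (S : E →L[𝕜] F) : StrongDual 𝕜 (StrongDual 𝕜 E) →L[𝕜] StrongDual 𝕜 (StrongDual 𝕜 F) :=
  dualOp (dualOp S)

end Defs

/-- The bidual of a normed space. -/
abbrev Bidual (𝕜 : Type*) [RCLike 𝕜] (E : Type*) [SeminormedAddCommGroup E]
    [NormedSpace 𝕜 E] : Type _ :=
  StrongDual 𝕜 (StrongDual 𝕜 E)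

/-- The quotient `E**/E` of the bidual by the canonical image of `E`. -/
abbrev BidualQuot (𝕜 : Type*) [RCLike 𝕜] (E : Type*) [NormedAddCommGroup E]
    [NormedSpace 𝕜 E] : Type _ :=
  @HasQuotient.Quotient (Bidual 𝕜 E) (Submodule 𝕜 (Bidual 𝕜 E))
    (@Submodule.hasQuotient 𝕜 (Bidual 𝕜 E) _ _ _)
    (LinearMap.range (inclusionInDoubleDual 𝕜 E : E →ₗ[𝕜] Bidual 𝕜 E))

section Defs3

variable {E F : Type*} [NormedAddCommGroup E] [NormedSpace 𝕜 E]
  [NormedAddCommGroup F] [NormedSpace 𝕜 F]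

/-- `RS` is the operator `R(S) : E**/E → F**/F` induced by `S`, i.e. it satisfies
`R(S)(x** + E) = S** x** + F`  (`R(S) = 0` iff `S` is weakly compact). -/
def IsRRep (S : E →L[𝕜] F) (RS : BidualQuot 𝕜 E →L[𝕜] BidualQuot 𝕜 F) : Prop :=
  ∀ u : Bidual 𝕜 E,
    RS (Submodule.Quotient.mk u) = Submodule.Quotient.mk (bidualOp S u)

end Defs3

section Quant

variable {E F : Type*} [NormedAddCommGroup E] [NormedSpace ℝ E]
  [NormedAddCommGroup F] [NormedSpace ℝ F]

/-- The measure of weak noncompactness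
`ω(S) = inf {ε > 0 : S B_E ⊆ T B_Z + ε B_F, Z Banach, T ∈ W(Z,F)}`. -/
def omegaW (S : E →L[ℝ] F) : ℝ :=
  sInf {ε : ℝ | 0 < ε ∧ ∃ (Z : BanachPkg ℝ) (T : Z.carrier →L[ℝ] F),
    WCompact T ∧ S '' closedBall 0 1 ⊆ T '' closedBall 0 1 + closedBall 0 ε}

/-- The measure of weak noncompactness
`β_W(S) = inf {ε > 0 : ∃ Z Banach, T ∈ W(E,Z), ‖Sx‖ ≤ ‖Tx‖ + ε‖x‖ ∀ x}`. -/
def betaW (S : E →L[ℝ] F) : ℝ :=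
  sInf {ε : ℝ | 0 < ε ∧ ∃ (Z : BanachPkg ℝ) (T : E →L[ℝ] Z.carrier),
    WCompact T ∧ ∀ x : E, ‖S x‖ ≤ ‖T x‖ + ε * ‖x‖}

end Quant

/-!
By Goldstine's theorem, the second adjoint of a weakly compact `T : Z → F` takes values in `F`;
hence `T*` is weak-*-to-weak continuous and maps the weak-* compact ball of `F*` onto a weakly
compact set (Gantmacher). With this, `β_W(S)`, `ω(S*)` and `β_W(S**)` are infima of the same set
of constants `ε`. If `‖Sx‖ ≤ ‖Tx‖ + ε‖x‖`, Hahn–Banach extends `(Tx, x) ↦ f(Sx)` from the graph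
of `T` under the seminorm `‖z‖ + ε‖x‖`, which splits `S* f = T* g + h` with `‖g‖ ≤ 1`, `‖h‖ ≤ ε`.
An inclusion `R B ⊆ T B + ε B` dualizes to `‖R* u‖ ≤ ‖T* u‖ + ε‖u‖`. Finally a domination of
`S**` restricts to the canonical image of `E`.
-/

open Set

-- `WeakDual` is a `def`, so the `WeakBilin` instance is not found through it.
instance {V : Type*} [AddCommGroup V] [TopologicalSpace V] [Module ℝ V] :
    LocallyConvexSpace ℝ (WeakDual ℝ V) :=
  WeakBilin.locallyConvexSpace

section Bidual

variable {X Y Z : Type*} [SeminormedAddCommGroup X] [NormedSpace 𝕜 X]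
  [SeminormedAddCommGroup Y] [NormedSpace 𝕜 Y] [SeminormedAddCommGroup Z] [NormedSpace 𝕜 Z]

@[simp]
theorem norm_inclusionInDoubleDual (x : X) : ‖inclusionInDoubleDual 𝕜 X x‖ = ‖x‖ :=
  (inclusionInDoubleDualLi 𝕜).norm_map x

@[simp]
theorem bidualOp_inclusionInDoubleDual (T : X →L[𝕜] Y) (x : X) :
    bidualOp T (inclusionInDoubleDual 𝕜 X x) = inclusionInDoubleDual 𝕜 Y (T x) :=
  rfl

theorem WCompact.comp {T : Y →L[𝕜] Z} (hT : WCompact T) {A : X →L[𝕜] Y} (hA : ‖A‖ ≤ 1) :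
    WCompact (T ∘L A) := by
  refine hT.of_isClosed_subset isClosed_closure (closure_mono (image_mono ?_))
  rintro - ⟨x, hx, rfl⟩
  refine ⟨A x, mem_closedBall_zero_iff.2 ?_, rfl⟩
  simpa using A.le_of_opNorm_le_of_le hA (mem_closedBall_zero_iff.1 hx)

end Bidual

section Goldstine

variable {X : Type*} [NormedAddCommGroup X] [NormedSpace ℝ X]

/-- **Goldstine's theorem** -/
theorem mem_closure_toWeakDual_image_inclusionInDoubleDual {u : Bidual ℝ X} (hu : ‖u‖ ≤ 1) :
    StrongDual.toWeakDual u ∈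
      closure (StrongDual.toWeakDual '' (inclusionInDoubleDual ℝ X '' closedBall 0 1)) := by
  by_contra hu_notMem
  have hconv : Convex ℝ
      (closure (StrongDual.toWeakDual '' (inclusionInDoubleDual ℝ X '' closedBall 0 1))) :=
    (((convex_closedBall 0 1).linear_image (inclusionInDoubleDual ℝ X : X →ₗ[ℝ] Bidual ℝ X)
      ).linear_image (StrongDual.toWeakDual : Bidual ℝ X ≃ₗ[ℝ] _).toLinearMap).closure
  obtain ⟨φ, s, hφu, hφs⟩ := geometric_hahn_banach_point_closed hconv isClosed_closure hu_notMem
  -- weak-* continuous functionals on `X**` are evaluations at points of `X*`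
  obtain ⟨f, rfl⟩ := LinearMap.dualEmbedding_surjective (𝕜 := ℝ) (E := Bidual ℝ X)
    (F := StrongDual ℝ X) (topDualPairing ℝ (StrongDual ℝ X)) φ
  have hf : ∀ z : X, ‖z‖ ≤ 1 → s < f z := fun z hz =>
    hφs _ (subset_closure ⟨_, ⟨z, mem_closedBall_zero_iff.2 hz, rfl⟩, rfl⟩)
  have hf_norm : ‖f‖ ≤ -s := by
    have hs : s < 0 := by simpa using hf 0 (by simp)
    refine f.opNorm_le_of_unit_norm (by linarith) fun z hz => abs_le.2 ⟨?_, ?_⟩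
    · linarith [hf z hz.le]
    · linarith [map_neg f z ▸ hf (-z) (by simp [hz])]
  have huf : -u f ≤ -s :=
    (neg_le_abs _).trans ((u.le_opNorm f).trans (by nlinarith [norm_nonneg f]))
  change u f < s at hφu
  linarith

end Goldstine

section Gantmacher

variable {Z F : Type*} [NormedAddCommGroup Z] [NormedSpace ℝ Z]
  [NormedAddCommGroup F] [NormedSpace ℝ F]

theorem WCompact.bidualOp_mem_range {T : Z →L[ℝ] F} (hT : WCompact T) (u : Bidual ℝ Z) :
    bidualOp T u ∈ range (inclusionInDoubleDual ℝ F) := by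
  suffices hball : closedBall (0 : Bidual ℝ Z) 1 ⊆
      ((LinearMap.range (inclusionInDoubleDual ℝ F : F →ₗ[ℝ] Bidual ℝ F)).comap
        (bidualOp T).toLinearMap : Set (Bidual ℝ Z)) by
    have hball_nhds := closedBall_mem_nhds (0 : Bidual ℝ Z) one_pos
    have := Submodule.eq_top_of_nonempty_interior' _
      ⟨0, interior_mono hball (mem_interior_iff_mem_nhds.2 hball_nhds)⟩
    exact Submodule.eq_top_iff'.1 this u
  intro v hv
  let Γ : WeakDual ℝ (StrongDual ℝ Z) → WeakDual ℝ (StrongDual ℝ F) := fun w =>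
    StrongDual.toWeakDual (bidualOp T (WeakDual.toStrongDual w))
  have hΓ : Continuous Γ := WeakDual.continuous_of_continuous_eval fun f =>
    WeakDual.eval_continuous (dualOp T f)
  let K := closure (toWeakSpace ℝ F '' (T '' closedBall 0 1))
  have hΓ_image : Γ '' (StrongDual.toWeakDual '' (inclusionInDoubleDual ℝ Z '' closedBall 0 1)) ⊆
      inclusionInDoubleDualWeak ℝ F '' K := by
    rintro - ⟨-, ⟨-, ⟨z, hz, rfl⟩, rfl⟩, rfl⟩
    exact ⟨_, subset_closure ⟨T z, ⟨z, hz, rfl⟩, rfl⟩, rfl⟩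
  -- by Goldstine, `T** v` lies in the weak-* closure of `J (T B_Z)`, inside the compact `J K`
  have hv' : Γ (StrongDual.toWeakDual v) ∈
      closure (Γ '' (StrongDual.toWeakDual '' (inclusionInDoubleDual ℝ Z '' closedBall 0 1))) :=
    image_closure_subset_closure_image hΓ (mem_image_of_mem Γ
      (mem_closure_toWeakDual_image_inclusionInDoubleDual
        ((mem_closedBall_zero_iff (E := Bidual ℝ Z)).1 hv)))
  obtain ⟨y, -, hy⟩ :=
    closure_minimal hΓ_image (hT.image (inclusionInDoubleDualWeak ℝ F).continuous).isClosed hv'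
  exact ⟨(toWeakSpace ℝ F).symm y, StrongDual.toWeakDual.injective hy⟩

theorem WCompact.dualOp {T : Z →L[ℝ] F} (hT : WCompact T) : WCompact (_root_.dualOp T) := by
  let g : WeakDual ℝ F → WeakSpace ℝ (StrongDual ℝ Z) := fun f =>
    toWeakSpace ℝ _ (_root_.dualOp T (WeakDual.toStrongDual f))
  have hg : Continuous g := by
    refine WeakBilin.continuous_of_continuous_eval _ fun u => ?_
    obtain ⟨y, hy⟩ := hT.bidualOp_mem_range u
    have hu : (fun f => (topDualPairing ℝ (StrongDual ℝ Z)).flip (g f) u) =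
        fun f : WeakDual ℝ F => f y := by
      funext f
      exact (DFunLike.congr_fun hy (WeakDual.toStrongDual f)).symm
    exact hu ▸ WeakDual.eval_continuous y
  refine ((WeakDual.isCompact_closedBall (0 : StrongDual ℝ F) 1).image hg).closure_of_subset ?_
  rintro - ⟨-, ⟨f, hf, rfl⟩, rfl⟩
  exact ⟨StrongDual.toWeakDual f, by simpa using hf, rfl⟩

end Gantmacher

section Duality

variable {X Y Z : Type*} [NormedAddCommGroup X] [NormedSpace ℝ X]
  [NormedAddCommGroup Y] [NormedSpace ℝ Y] [NormedAddCommGroup Z] [NormedSpace ℝ Z]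

theorem dualOp_image_closedBall_subset_of_norm_le (S : X →L[ℝ] Y) (T : X →L[ℝ] Z) {ε : ℝ}
    (hε : 0 ≤ ε) (hST : ∀ x, ‖S x‖ ≤ ‖T x‖ + ε * ‖x‖) :
    dualOp S '' closedBall 0 1 ⊆ dualOp T '' closedBall 0 1 + closedBall 0 ε := by
  rintro - ⟨f, hf, rfl⟩
  rw [mem_closedBall_zero_iff] at hf
  let p : Seminorm ℝ (Z × X) := (normSeminorm ℝ Z).comp (LinearMap.fst ℝ Z X) +
    ε.toNNReal • (normSeminorm ℝ X).comp (LinearMap.snd ℝ Z X)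
  have hp (z : Z) (x : X) : p (z, x) = ‖z‖ + ε * ‖x‖ := by
    simp [p, NNReal.smul_def, Real.coe_toNNReal _ hε]
  let G := LinearMap.range ((T : X →ₗ[ℝ] Z).prod LinearMap.id)
  let φ : Module.Dual ℝ G :=
    ((f ∘L S : X →L[ℝ] ℝ) : X →ₗ[ℝ] ℝ) ∘ₗ LinearMap.snd ℝ Z X ∘ₗ G.subtype
  have hφp : ∀ v, φ v ≤ p v := by
    rintro ⟨-, x, rfl⟩
    calc f (S x) ≤ ‖f‖ * ‖S x‖ := (Real.le_norm_self _).trans (f.le_opNorm _)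
      _ ≤ ‖S x‖ := mul_le_of_le_one_left (norm_nonneg _) hf
      _ ≤ p (T x, x) := (hST x).trans_eq (hp _ _).symm
  obtain ⟨ψ, hψφ, hψp⟩ := Module.Dual.exists_extension_of_le_seminorm_real G φ hφp
  let g := (ψ ∘ₗ LinearMap.inl ℝ Z X).mkContinuous 1 fun z => by simpa [hp] using hψp (z, 0)
  let h := (ψ ∘ₗ LinearMap.inr ℝ Z X).mkContinuous ε fun x => by simpa [hp] using hψp (0, x)
  have hg : g ∈ closedBall 0 1 :=
    mem_closedBall_zero_iff.2 (LinearMap.mkContinuous_norm_le _ zero_le_one _)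
  have hh : h ∈ closedBall 0 ε := mem_closedBall_zero_iff.2 (LinearMap.mkContinuous_norm_le _ hε _)
  refine ⟨dualOp T g, mem_image_of_mem _ hg, h, hh, ?_⟩
  ext x
  calc g (T x) + h x = ψ (T x, x) := by simp [g, h, ← map_add]
    _ = f (S x) := hψφ ⟨(T x, x), x, rfl⟩

theorem norm_dualOp_le_of_image_closedBall_subset (R : X →L[ℝ] Y) (T : Z →L[ℝ] Y) {ε : ℝ}
    (hε : 0 ≤ ε) (hRT : R '' closedBall 0 1 ⊆ T '' closedBall 0 1 + closedBall 0 ε)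
    (u : StrongDual ℝ Y) : ‖dualOp R u‖ ≤ ‖dualOp T u‖ + ε * ‖u‖ := by
  refine (dualOp R u).opNorm_le_of_unit_norm
    (add_nonneg (norm_nonneg _) (mul_nonneg hε (norm_nonneg _))) fun x hx => ?_
  obtain ⟨-, ⟨z, hz, rfl⟩, y, hy, hzy⟩ :=
    hRT (mem_image_of_mem R (mem_closedBall_zero_iff.2 hx.le))
  rw [mem_closedBall_zero_iff] at hz hy
  calc ‖dualOp R u x‖ = ‖dualOp T u z + u y‖ := by
        rw [dualOp_apply, ← hzy, map_add, dualOp_apply]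
    _ ≤ ‖dualOp T u‖ * 1 + ‖u‖ * ε :=
      norm_add_le_of_le ((dualOp T u).le_opNorm_of_le hz) (u.le_opNorm_of_le hy)
    _ = ‖dualOp T u‖ + ε * ‖u‖ := by ring

end Duality

section Admissible

variable {X Y : Type*} [NormedAddCommGroup X] [NormedSpace ℝ X]
  [NormedAddCommGroup Y] [NormedSpace ℝ Y]

def betaWSet (S : X →L[ℝ] Y) : Set ℝ :=
  {ε : ℝ | 0 < ε ∧ ∃ (Z : BanachPkg ℝ) (T : X →L[ℝ] Z.carrier),
    WCompact T ∧ ∀ x : X, ‖S x‖ ≤ ‖T x‖ + ε * ‖x‖}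

def omegaWSet (S : X →L[ℝ] Y) : Set ℝ :=
  {ε : ℝ | 0 < ε ∧ ∃ (Z : BanachPkg ℝ) (T : Z.carrier →L[ℝ] Y),
    WCompact T ∧ S '' closedBall 0 1 ⊆ T '' closedBall 0 1 + closedBall 0 ε}

theorem betaW_eq_sInf_betaWSet (S : X →L[ℝ] Y) : betaW S = sInf (betaWSet S) := rfl

theorem omegaW_eq_sInf_omegaWSet (S : X →L[ℝ] Y) : omegaW S = sInf (omegaWSet S) := rfl

theorem betaWSet_subset_omegaWSet_dualOp (S : X →L[ℝ] Y) :
    betaWSet S ⊆ omegaWSet (dualOp S) := by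
  rintro ε ⟨hε, Z, T, hT, hST⟩
  exact ⟨hε, ⟨StrongDual ℝ Z.carrier⟩, dualOp T, hT.dualOp,
    dualOp_image_closedBall_subset_of_norm_le S T hε.le hST⟩

theorem omegaWSet_subset_betaWSet_dualOp (R : X →L[ℝ] Y) :
    omegaWSet R ⊆ betaWSet (dualOp R) := by
  rintro ε ⟨hε, Z, T, hT, hRT⟩
  exact ⟨hε, ⟨StrongDual ℝ Z.carrier⟩, dualOp T, hT.dualOp,
    norm_dualOp_le_of_image_closedBall_subset R T hε.le hRT⟩

theorem betaWSet_bidualOp_subset (S : X →L[ℝ] Y) :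
    betaWSet (X := Bidual ℝ X) (Y := Bidual ℝ Y) (bidualOp S) ⊆ betaWSet S := by
  rintro ε ⟨hε, Z, T, hT, hST⟩
  refine ⟨hε, Z, T ∘L inclusionInDoubleDual ℝ X, hT.comp (inclusionInDoubleDual_norm_le ℝ X),
    fun x => ?_⟩
  simpa using hST (inclusionInDoubleDual ℝ X x)

end Admissible

theorem betaW_eq_omegaW_dual_eq_betaW_bidual_general
    {E F : Type*} [NormedAddCommGroup E] [NormedSpace ℝ E]
    [NormedAddCommGroup F] [NormedSpace ℝ F]
    (S : E →L[ℝ] F) :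
    betaW S = omegaW (dualOp S) ∧
    omegaW (dualOp S) = betaW (E := Bidual ℝ E) (F := Bidual ℝ F) (bidualOp S) := by
  have h₁ := betaWSet_subset_omegaWSet_dualOp S
  have h₂ := omegaWSet_subset_betaWSet_dualOp (dualOp S)
  have h₃ := betaWSet_bidualOp_subset S
  simp only [betaW_eq_sInf_betaWSet, omegaW_eq_sInf_omegaWSet]
  exact ⟨congrArg sInf (h₁.antisymm (h₂.trans h₃)), congrArg sInf (h₂.antisymm (h₃.trans h₁))⟩

/-- For all Banach spaces `E`, `F` and every `S ∈ L(E,F)`: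
`β_W(S) = ω(S*) = β_W(S**)`. -/
theorem betaW_eq_omegaW_dual_eq_betaW_bidual
    {E F : Type*} [NormedAddCommGroup E] [NormedSpace ℝ E] [CompleteSpace E]
    [NormedAddCommGroup F] [NormedSpace ℝ F] [CompleteSpace F]
    (S : E →L[ℝ] F) :
    betaW S = omegaW (dualOp S) ∧
    omegaW (dualOp S) = betaW (E := Bidual ℝ E) (F := Bidual ℝ F) (bidualOp S) :=
  betaW_eq_omegaW_dual_eq_betaW_bidual_general S

end
end

section
/- Let n be a positive integer and S = (s_ij) a real n×n matrix. Let ℓ₂ⁿ(ℓ₁ⁿ) denote the space of n-tuples (y_1,…,y_n) with each y_j ∈ ℝⁿ equipped with the ℓ¹-norm, and where the norm of (y_1,…,y_n) is the ℓ²-norm of (‖y_1‖_1,…,‖y_n‖_1). Define the operator S̃ on ℓ₂ⁿ(ℓ₁ⁿ) by S̃(y_1,…,y_n) = (∑_{j=1}^n s_{1j} y_j, …, ∑_{j=1}^n s_{nj} y_j). Then the operator norm of S̃ equals ‖S‖_r, where ‖S‖_r denotes the operator norm on the Euclidean space ℓ₂ⁿ of the matrix (|s_ij|) of absolute values. -/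
noncomputable section

/-- The space `ℓ₂ⁿ(ℓ₁ⁿ)`: `n`-tuples of vectors of `ℝⁿ` with the `ℓ¹`-norm, normed by the
`ℓ²`-norm of the tuple of `ℓ¹`-norms. -/
abbrev EllTwoOne (n : ℕ) := PiLp 2 (fun _ : Fin n => PiLp 1 fun _ : Fin n => ℝ)

/-- The operator `S̃(y₁,…,yₙ) = (∑ⱼ s₁ⱼ yⱼ, …, ∑ⱼ sₙⱼ yⱼ)` on `ℓ₂ⁿ(ℓ₁ⁿ)`. -/
def matrixTilde {n : ℕ} (S : Matrix (Fin n) (Fin n) ℝ) :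
    EllTwoOne n →L[ℝ] EllTwoOne n :=
  haveI : ContinuousSMul ℝ (EllTwoOne n) := IsBoundedSMul.continuousSMul
  LinearMap.toContinuousLinearMap
    { toFun := fun y => WithLp.toLp 2 fun i => ∑ j, S i j • y j
      map_add' := fun y z => by
        apply WithLp.ofLp_injective
        funext i
        simp [smul_add, Finset.sum_add_distrib]
      map_smul' := fun c y => by
        apply WithLp.ofLp_injective
        funext i
        simp [Finset.smul_sum, smul_comm c] }

/-- The regular norm `‖S‖_r` of a real `n×n` matrix: the operator norm on the Euclidean
space `ℓ₂ⁿ` of the matrix `(|s_ij|)` of absolute values. -/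
def regularNorm {n : ℕ} (S : Matrix (Fin n) (Fin n) ℝ) : ℝ :=
  ‖LinearMap.toContinuousLinearMap (Matrix.toEuclideanLin (S.map fun a => |a|))‖

/-!
Both inequalities are coordinatewise comparisons, and the norm of `PiLp p` is monotone in the
norms of the coordinates. For `y ∈ ℓ₂ⁿ(ℓ₁ⁿ)`, `‖(S̃ y)ᵢ‖₁ ≤ ∑ⱼ |sᵢⱼ| ‖yⱼ‖₁ = (|S| η)ᵢ` where
`η = (‖y₁‖₁, …, ‖yₙ‖₁)` has `‖η‖₂ = ‖y‖`, so `‖S̃‖ ≤ ‖S‖_r`. Conversely, for `v ∈ ℓ₂ⁿ` take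
`yⱼ = |vⱼ| eⱼ`: then `(S̃ y)ᵢ = (sᵢₖ |vₖ|)ₖ`, whose `ℓ¹`-norm `∑ₖ |sᵢₖ| |vₖ|` dominates
`|(|S| v)ᵢ|`, while `‖y‖ = ‖v‖`; hence `‖S‖_r ≤ ‖S̃‖`.
-/

namespace PiLp

variable {p : ENNReal} {ι : Type*} [Fintype ι] {β γ : ι → Type*}
  [∀ i, SeminormedAddCommGroup (β i)] [∀ i, SeminormedAddCommGroup (γ i)]

theorem norm_le_norm_of_forall_norm_le (hp : p ≠ 0) {x : PiLp p β} {y : PiLp p γ}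
    (h : ∀ i, ‖x i‖ ≤ ‖y i‖) : ‖x‖ ≤ ‖y‖ := by
  obtain rfl | rfl | hp := p.trichotomy
  · exact absurd rfl hp
  · rw [norm_eq_ciSup, norm_eq_ciSup]
    exact ciSup_mono (Set.finite_range _).bddAbove h
  · rw [norm_eq_sum hp, norm_eq_sum hp]
    gcongr
    exact h _

theorem norm_eq_norm_of_forall_norm_eq (hp : p ≠ 0) {x : PiLp p β} {y : PiLp p γ}
    (h : ∀ i, ‖x i‖ = ‖y i‖) : ‖x‖ = ‖y‖ :=
  (norm_le_norm_of_forall_norm_le hp fun i => (h i).le).antisymm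
    (norm_le_norm_of_forall_norm_le hp fun i => (h i).ge)

end PiLp

theorem Matrix.toEuclideanLin_map_abs_apply {m ι : Type*} [Fintype ι] [DecidableEq ι]
    (S : Matrix m ι ℝ) (v : EuclideanSpace ℝ ι) (i : m) :
    Matrix.toEuclideanLin (S.map fun a => |a|) v i = ∑ j, |S i j| * v j := by
  simp [Matrix.mulVec, dotProduct]

theorem matrixTilde_apply {n : ℕ} (S : Matrix (Fin n) (Fin n) ℝ) (y : EllTwoOne n) (i : Fin n) :
    matrixTilde S y i = ∑ j, S i j • y j := rfl

namespace EllTwoOne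

variable {n : ℕ} (S : Matrix (Fin n) (Fin n) ℝ)

def norms (y : EllTwoOne n) : EuclideanSpace ℝ (Fin n) :=
  WithLp.toLp 2 fun j => ‖y j‖

theorem norm_norms (y : EllTwoOne n) : ‖norms y‖ = ‖y‖ :=
  PiLp.norm_eq_norm_of_forall_norm_eq two_ne_zero fun j => by simp [norms]

theorem norm_matrixTilde_apply_le (y : EllTwoOne n) (i : Fin n) :
    ‖matrixTilde S y i‖ ≤ ‖Matrix.toEuclideanLin (S.map fun a => |a|) (norms y) i‖ := by
  rw [matrixTilde_apply, Matrix.toEuclideanLin_map_abs_apply,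
    Real.norm_of_nonneg (by simp only [norms]; positivity)]
  calc ‖∑ j, S i j • y j‖ ≤ ∑ j, ‖S i j • y j‖ := norm_sum_le _ _
    _ = ∑ j, |S i j| * norms y j := by simp [norm_smul, norms]

def diagonalLift (v : EuclideanSpace ℝ (Fin n)) : EllTwoOne n :=
  WithLp.toLp 2 fun j => PiLp.single 1 j |v j|

theorem norm_diagonalLift (v : EuclideanSpace ℝ (Fin n)) : ‖diagonalLift v‖ = ‖v‖ :=
  PiLp.norm_eq_norm_of_forall_norm_eq two_ne_zero fun j => by
    simp [diagonalLift, PiLp.norm_single]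

theorem matrixTilde_diagonalLift_apply (v : EuclideanSpace ℝ (Fin n)) (i k : Fin n) :
    matrixTilde S (diagonalLift v) i k = S i k * |v k| := by
  simp [matrixTilde_apply, diagonalLift, Pi.single_apply]

theorem norm_toEuclideanLin_map_abs_apply_le (v : EuclideanSpace ℝ (Fin n)) (i : Fin n) :
    ‖Matrix.toEuclideanLin (S.map fun a => |a|) v i‖ ≤ ‖matrixTilde S (diagonalLift v) i‖ := by
  rw [Matrix.toEuclideanLin_map_abs_apply, PiLp.norm_eq_of_L1, Real.norm_eq_abs]
  calc |∑ j, |S i j| * v j| ≤ ∑ j, |(|S i j| * v j)| := Finset.abs_sum_le_sum_abs _ _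
    _ = ∑ j, ‖matrixTilde S (diagonalLift v) i j‖ := by
      simp [matrixTilde_diagonalLift_apply, abs_mul]

end EllTwoOne

open EllTwoOne in
theorem norm_matrixTilde_eq_regularNorm_general {n : ℕ}
    (S : Matrix (Fin n) (Fin n) ℝ) :
    ‖matrixTilde S‖ = regularNorm S := by
  set A := LinearMap.toContinuousLinearMap (Matrix.toEuclideanLin (S.map fun a => |a|))
  refine le_antisymm (ContinuousLinearMap.opNorm_le_bound _ (norm_nonneg A) fun y => ?_)
    (ContinuousLinearMap.opNorm_le_bound _ (norm_nonneg _) fun v => ?_)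
  · calc ‖matrixTilde S y‖ ≤ ‖A (norms y)‖ :=
          PiLp.norm_le_norm_of_forall_norm_le two_ne_zero (norm_matrixTilde_apply_le S y)
      _ ≤ ‖A‖ * ‖y‖ := norm_norms y ▸ A.le_opNorm _
  · calc ‖A v‖ ≤ ‖matrixTilde S (diagonalLift v)‖ :=
          PiLp.norm_le_norm_of_forall_norm_le two_ne_zero
            (norm_toEuclideanLin_map_abs_apply_le S v)
      _ ≤ ‖matrixTilde S‖ * ‖v‖ := norm_diagonalLift v ▸ (matrixTilde S).le_opNorm _

/-- The operator norm of `S̃` on `ℓ₂ⁿ(ℓ₁ⁿ)` equals the regular norm `‖S‖_r`. -/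
theorem norm_matrixTilde_eq_regularNorm {n : ℕ} (hn : 0 < n)
    (S : Matrix (Fin n) (Fin n) ℝ) :
    ‖matrixTilde S‖ = regularNorm S :=
  norm_matrixTilde_eq_regularNorm_general S

end
end
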